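/- Let S ⊆ {1,…,n} and suppose β̂ is a random vector in ℝ^p, measurable with respect to (ε_i)_{i∈S}, such that |β̂|₁ ≤ L and Σ_{i∈S}(y_i − x_iβ̂)² ≤ Σ_{i∈S}(y_i − x_iβ*)², where y_i = x_iβ* + ε_i. If |β*|₁ ≤ L, then E( Σ_{i∈S} (x_iβ* − x_iβ̂)² ) ≤ 2Lσ (2M^{1/2} n log(2p))^{1/2}. -/

import Mathlib

open MeasureTheory ProbabilityTheory Real Finset
open scoped NNReal

/-!
Expanding the least-squares inequality gives the basic inequality
`Σ_S (x_iβ* − x_iβ̂)² ≤ 2⟨β̂ − β*, V⟩` with `V_j = Σ_{i∈S} x_ij εᵢ`. By Hölder,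
`⟨β̂, V⟩ ≤ L max_j |V_j|`, while `⟨β*, V⟩` has mean zero. Each `V_j` is a centred Gaussian with
variance `σ² Σ_{i∈S} x_ij² ≤ σ² n √M` (Cauchy–Schwarz against the fourth moments), and for `N`
random variables with sub-Gaussian parameter `c` the Chernoff–Jensen argument gives
`E max_j |V_j| ≤ √(2 c log (2N))`.
-/

theorem Finset.aemeasurable_sup'_apply {α δ ι : Type*} [MeasurableSpace α] [SemilatticeSup α]
    [MeasurableSup₂ α] [MeasurableSpace δ] {μ : Measure δ} {s : Finset ι} (hs : s.Nonempty)
    {f : ι → δ → α} (hf : ∀ n ∈ s, AEMeasurable (f n) μ) :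
    AEMeasurable (fun x => s.sup' hs fun n => f n x) μ := by
  simp_rw [← Finset.sup'_apply]
  exact sup'_induction hs _ (p := fun g => AEMeasurable g μ) (fun _ hg _ hg' => hg.sup hg') hf

section LeastSquares

variable {ι κ : Type*}

lemma sum_sq_le_sqrt_card_mul_sum_pow_four [Fintype ι] (s : Finset ι) (a : ι → ℝ) :
    ∑ i ∈ s, a i ^ 2 ≤ √(Fintype.card ι * ∑ i, a i ^ 4) := by
  refine (le_sqrt (sum_nonneg fun i _ => sq_nonneg _) (by positivity)).2 ?_
  calc (∑ i ∈ s, a i ^ 2) ^ 2 ≤ #s * ∑ i ∈ s, (a i ^ 2) ^ 2 := sq_sum_le_card_mul_sum_sq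
    _ ≤ Fintype.card ι * ∑ i, (a i ^ 2) ^ 2 :=
      mul_le_mul (mod_cast card_le_univ s)
        (sum_le_sum_of_subset_of_nonneg (subset_univ s) fun i _ _ => sq_nonneg _)
        (sum_nonneg fun i _ => sq_nonneg _) (Nat.cast_nonneg _)
    _ = Fintype.card ι * ∑ i, a i ^ 4 := by simp_rw [← pow_mul]

lemma sum_sq_le_card_mul_sqrt [Fintype ι] [Nonempty ι] (s : Finset ι) (a : ι → ℝ) {M : ℝ}
    (hM : (1 / Fintype.card ι : ℝ) * ∑ i, a i ^ 4 ≤ M) :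
    ∑ i ∈ s, a i ^ 2 ≤ Fintype.card ι * √M := by
  rw [one_div_mul_eq_div, div_le_iff₀' (by simp [Fintype.card_pos])] at hM
  calc ∑ i ∈ s, a i ^ 2 ≤ √(Fintype.card ι * ∑ i, a i ^ 4) :=
        sum_sq_le_sqrt_card_mul_sum_pow_four s a
    _ ≤ √(Fintype.card ι * (Fintype.card ι * M)) := sqrt_le_sqrt (by gcongr)
    _ = Fintype.card ι * √M := by
      rw [← mul_assoc, sqrt_mul (by positivity), sqrt_mul_self (by positivity)]

lemma sum_sq_sub_le_of_sum_sq_add_sub_le (s : Finset ι) (a b e : ι → ℝ)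
    (h : ∑ i ∈ s, (a i + e i - b i) ^ 2 ≤ ∑ i ∈ s, (a i + e i - a i) ^ 2) :
    ∑ i ∈ s, (a i - b i) ^ 2 ≤ 2 * ∑ i ∈ s, (b i - a i) * e i := by
  have expand : ∀ i, (a i + e i - b i) ^ 2
      = (a i - b i) ^ 2 - 2 * ((b i - a i) * e i) + (a i + e i - a i) ^ 2 := fun i => by ring
  simp only [expand, sum_add_distrib, sum_sub_distrib, ← mul_sum] at h
  linarith

lemma sum_sum_mul_mul_eq [Fintype κ] (s : Finset ι) (x : ι → κ → ℝ) (β : κ → ℝ) (e : ι → ℝ) :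
    ∑ i ∈ s, (∑ j, x i j * β j) * e i = ∑ j, β j * ∑ i ∈ s, x i j * e i := by
  simp only [sum_mul, mul_sum]
  rw [sum_comm]
  exact sum_congr rfl fun _ _ => sum_congr rfl fun _ _ => by ring

lemma sum_mul_le_sum_abs_mul (s : Finset κ) (β v : κ → ℝ) {z : ℝ} (hv : ∀ j ∈ s, |v j| ≤ z) :
    ∑ j ∈ s, β j * v j ≤ (∑ j ∈ s, |β j|) * z := by
  rw [sum_mul]
  refine sum_le_sum fun j hj => (le_abs_self _).trans ?_
  rw [abs_mul]
  exact mul_le_mul_of_nonneg_left (hv j hj) (abs_nonneg _)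

lemma sum_sq_sub_le_two_mul_sup'_abs [Fintype κ] [Nonempty κ] (s : Finset ι) (x : ι → κ → ℝ)
    (βs βh : κ → ℝ) (e : ι → ℝ) {L : ℝ} (hβh : ∑ j, |βh j| ≤ L)
    (hmin : ∑ i ∈ s, (∑ j, x i j * βs j + e i - ∑ j, x i j * βh j) ^ 2
      ≤ ∑ i ∈ s, (∑ j, x i j * βs j + e i - ∑ j, x i j * βs j) ^ 2) :
    ∑ i ∈ s, (∑ j, x i j * βs j - ∑ j, x i j * βh j) ^ 2
      ≤ 2 * (L * (univ.sup' univ_nonempty fun j => |∑ i ∈ s, x i j * e i|)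
        - ∑ j, βs j * ∑ i ∈ s, x i j * e i) := by
  set V := fun j => ∑ i ∈ s, x i j * e i
  set Z := univ.sup' univ_nonempty fun j => |V j|
  have hV : ∀ j ∈ univ, |V j| ≤ Z := fun j hj => le_sup' (fun j => |V j|) hj
  have hZ : 0 ≤ Z := (abs_nonneg _).trans (hV (Classical.arbitrary κ) (mem_univ _))
  calc ∑ i ∈ s, (∑ j, x i j * βs j - ∑ j, x i j * βh j) ^ 2
      ≤ 2 * ∑ i ∈ s, (∑ j, x i j * βh j - ∑ j, x i j * βs j) * e i :=
        sum_sq_sub_le_of_sum_sq_add_sub_le s _ _ e hmin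
    _ = 2 * (∑ j, βh j * V j - ∑ j, βs j * V j) := by
        simp only [sub_mul, sum_sub_distrib, sum_sum_mul_mul_eq, V]
    _ ≤ 2 * (L * Z - ∑ j, βs j * V j) := by
        gcongr
        exact (sum_mul_le_sum_abs_mul univ βh V hV).trans (mul_le_mul_of_nonneg_right hβh hZ)

end LeastSquares

namespace ProbabilityTheory

variable {Ω : Type*} {mΩ : MeasurableSpace Ω} {μ : Measure Ω}

lemma HasSubgaussianMGF.mono {X : Ω → ℝ} {c d : ℝ≥0} (h : HasSubgaussianMGF X c μ)
    (hcd : c ≤ d) : HasSubgaussianMGF X d μ where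
  integrable_exp_mul := h.integrable_exp_mul
  mgf_le t := (h.mgf_le t).trans <| exp_le_exp.2 <| by gcongr

lemma hasSubgaussianMGF_of_map_eq_gaussianReal {X : Ω → ℝ} {v : ℝ≥0}
    (h : μ.map X = gaussianReal 0 v) : HasSubgaussianMGF X v μ := by
  rw [← HasSubgaussianMGF.id_map_iff (aemeasurable_of_map_neZero (by rw [h]; infer_instance)), h]
  exact ⟨integrable_exp_mul_gaussianReal, fun t => by simp [mgf_id_gaussianReal]⟩

lemma integral_eq_zero_of_map_eq_gaussianReal {X : Ω → ℝ} {v : ℝ≥0}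
    (h : μ.map X = gaussianReal 0 v) : ∫ ω, X ω ∂μ = 0 := by
  rw [← integral_map (f := fun x => x) (aemeasurable_of_map_neZero (by rw [h]; infer_instance))
    aestronglyMeasurable_id, h, integral_id_gaussianReal]

lemma hasSubgaussianMGF_sum_mul {ι : Type*} {ε : ι → Ω → ℝ} {v : ℝ≥0} (hindep : iIndepFun ε μ)
    (hε : ∀ i, HasSubgaussianMGF (ε i) v μ) (s : Finset ι) (a : ι → ℝ) {d : ℝ≥0}
    (hd : v * ∑ i ∈ s, a i ^ 2 ≤ d) :
    HasSubgaussianMGF (fun ω => ∑ i ∈ s, a i * ε i ω) d μ := by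
  refine (HasSubgaussianMGF.sum_of_iIndepFun
    (hindep.comp (fun i r => a i * r) fun i => measurable_const_mul (a i))
    (s := s) fun i _ => (hε i).const_mul (a i)).mono ?_
  rw [← NNReal.coe_le_coe, NNReal.coe_sum]
  refine le_trans (le_of_eq ?_) hd
  rw [mul_sum]
  exact sum_congr rfl fun i _ => mul_comm _ _

lemma integral_sum_mul_eq_zero {ι : Type*} {Y : ι → Ω → ℝ} (s : Finset ι) (a : ι → ℝ)
    (hY : ∀ i ∈ s, Integrable (Y i) μ) (h0 : ∀ i ∈ s, ∫ ω, Y i ω ∂μ = 0) :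
    ∫ ω, ∑ i ∈ s, a i * Y i ω ∂μ = 0 := by
  rw [integral_finsetSum s fun i hi => (hY i hi).const_mul (a i)]
  exact sum_eq_zero fun i hi => by rw [integral_const_mul, h0 i hi, mul_zero]

section Maximal

variable {ι : Type*} [Fintype ι] [Nonempty ι]

lemma exp_mul_sup'_abs_le (x : ι → ℝ) (t : ℝ) :
    exp (t * univ.sup' univ_nonempty fun j => |x j|) ≤ ∑ j, (exp (t * x j) + exp (-t * x j)) := by
  obtain ⟨j, -, hj⟩ := exists_mem_eq_sup' univ_nonempty fun j => |x j|
  rw [hj]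
  refine le_trans ?_ (single_le_sum (f := fun j => exp (t * x j) + exp (-t * x j))
    (fun j _ => by positivity) (mem_univ j))
  rcases abs_choice (x j) with h | h <;> rw [h]
  · linarith [exp_pos (-t * x j)]
  · rw [mul_neg, ← neg_mul]
    linarith [exp_pos (t * x j)]

variable {X : ι → Ω → ℝ} {c : ℝ≥0}

lemma integrable_sup'_abs (hX : ∀ j, Integrable (X j) μ) :
    Integrable (fun ω => univ.sup' univ_nonempty fun j => |X j ω|) μ := by
  refine (integrable_finsetSum univ fun j _ => (hX j).abs).mono'
    (aemeasurable_sup'_apply _ fun j _ => (hX j).aemeasurable.abs).aestronglyMeasurable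
    (ae_of_all _ fun ω => ?_)
  obtain ⟨j, -, hj⟩ := exists_mem_eq_sup' univ_nonempty fun j => |X j ω|
  rw [norm_eq_abs, hj, abs_abs]
  exact single_le_sum (f := fun j => |X j ω|) (fun j _ => abs_nonneg _) (mem_univ j)

lemma mul_integral_sup'_abs_le [IsProbabilityMeasure μ] (hX : ∀ j, HasSubgaussianMGF (X j) c μ)
    (t : ℝ) :
    t * ∫ ω, (univ.sup' univ_nonempty fun j => |X j ω|) ∂μ
      ≤ log (2 * Fintype.card ι) + c * t ^ 2 / 2 := by
  set Z := fun ω => univ.sup' univ_nonempty fun j => |X j ω|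
  have hZ : Integrable Z μ := integrable_sup'_abs fun j => (hX j).integrable
  have hexp : Integrable (fun ω => ∑ j, (exp (t * X j ω) + exp (-t * X j ω))) μ :=
    integrable_finsetSum _ fun j _ =>
      ((hX j).integrable_exp_mul t).add ((hX j).integrable_exp_mul (-t))
  have hexpZ : Integrable (fun ω => exp (t * Z ω)) μ :=
    hexp.mono' (measurable_exp.comp_aemeasurable (hZ.aemeasurable.const_mul t)).aestronglyMeasurable
      (ae_of_all _ fun ω => by
        rw [norm_of_nonneg (exp_pos _).le]
        exact exp_mul_sup'_abs_le (fun j => X j ω) t)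
  have hjensen : exp (t * ∫ ω, Z ω ∂μ) ≤ ∫ ω, exp (t * Z ω) ∂μ := by
    rw [← integral_const_mul]
    exact convexOn_exp.map_integral_le continuous_exp.continuousOn isClosed_univ
      (ae_of_all _ fun _ => Set.mem_univ _) (hZ.const_mul t) hexpZ
  have hmgf : ∫ ω, exp (t * Z ω) ∂μ ≤ 2 * Fintype.card ι * exp (c * t ^ 2 / 2) := by
    calc ∫ ω, exp (t * Z ω) ∂μ ≤ ∫ ω, ∑ j, (exp (t * X j ω) + exp (-t * X j ω)) ∂μ :=
          integral_mono hexpZ hexp fun ω => exp_mul_sup'_abs_le (fun j => X j ω) t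
      _ = ∑ j, (mgf (X j) μ t + mgf (X j) μ (-t)) := by
          rw [integral_finsetSum (f := fun j ω => exp (t * X j ω) + exp (-t * X j ω)) _ fun j _ =>
            ((hX j).integrable_exp_mul t).add ((hX j).integrable_exp_mul (-t))]
          exact sum_congr rfl fun j _ =>
            integral_add ((hX j).integrable_exp_mul t) ((hX j).integrable_exp_mul (-t))
      _ ≤ ∑ _j : ι, (exp (c * t ^ 2 / 2) + exp (c * t ^ 2 / 2)) := by
          refine sum_le_sum fun j _ => add_le_add ((hX j).mgf_le t) ?_
          simpa using (hX j).mgf_le (-t)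
      _ = 2 * Fintype.card ι * exp (c * t ^ 2 / 2) := by
          rw [sum_const, card_univ, nsmul_eq_mul]
          ring
  rw [← exp_le_exp, exp_add, exp_log (by positivity)]
  exact hjensen.trans hmgf

lemma integral_sup'_abs_le [IsProbabilityMeasure μ] (hX : ∀ j, HasSubgaussianMGF (X j) c μ) :
    ∫ ω, (univ.sup' univ_nonempty fun j => |X j ω|) ∂μ
      ≤ √(2 * c * log (2 * Fintype.card ι)) := by
  set K := log (2 * Fintype.card ι)
  have hK : 0 < K := log_pos (by have := Fintype.card_pos (α := ι); norm_cast; omega)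
  rcases eq_zero_or_pos c with rfl | hc
  · have h0 : ∀ᵐ ω ∂μ, ∀ j, X j ω = 0 :=
      ae_all_iff.2 fun j => (hX j).ae_eq_zero_of_hasSubgaussianMGF_zero
    rw [integral_eq_zero_of_ae (h0.mono fun ω hω => by simp [hω])]
    positivity
  -- the optimal choice `t = √(2K/c)` in the Chernoff bound
  set t := √(2 * K / c)
  have ht : 0 < t := sqrt_pos.2 (by positivity)
  have hct : c * t ^ 2 / 2 = K := by
    rw [sq_sqrt (by positivity)]
    field_simp
  have htK : t * √(2 * c * K) = 2 * K := by
    rw [← sqrt_mul (by positivity), show 2 * K / c * (2 * c * K) = (2 * K) ^ 2 by field_simp,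
      sqrt_sq (by positivity)]
  refine le_of_mul_le_mul_left ?_ ht
  linarith [mul_integral_sup'_abs_le hX t]

end Maximal

end ProbabilityTheory

theorem integral_sum_sq_sub_le_of_hasSubgaussianMGF {Ω ι κ : Type*} {mΩ : MeasurableSpace Ω}
    {μ : Measure Ω} [IsProbabilityMeasure μ] [Fintype κ] [Nonempty κ] (s : Finset ι)
    (x : ι → κ → ℝ) (βs : κ → ℝ) (βh : Ω → κ → ℝ) (ε : ι → Ω → ℝ) {L : ℝ} {c : ℝ≥0}
    (hL : 0 ≤ L) (hβh : ∀ ω, ∑ j, |βh ω j| ≤ L) (hε : ∀ i ∈ s, Integrable (ε i) μ)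
    (hε0 : ∀ i ∈ s, ∫ ω, ε i ω ∂μ = 0)
    (hV : ∀ j, HasSubgaussianMGF (fun ω => ∑ i ∈ s, x i j * ε i ω) c μ)
    (hmin : ∀ ω, ∑ i ∈ s, (∑ j, x i j * βs j + ε i ω - ∑ j, x i j * βh ω j) ^ 2
      ≤ ∑ i ∈ s, (∑ j, x i j * βs j + ε i ω - ∑ j, x i j * βs j) ^ 2) :
    ∫ ω, ∑ i ∈ s, (∑ j, x i j * βs j - ∑ j, x i j * βh ω j) ^ 2 ∂μ
      ≤ 2 * L * √(2 * c * log (2 * Fintype.card κ)) := by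
  set V : κ → Ω → ℝ := fun j ω => ∑ i ∈ s, x i j * ε i ω
  set Z := fun ω => univ.sup' univ_nonempty fun j => |V j ω|
  have hZ : Integrable Z μ := integrable_sup'_abs fun j => (hV j).integrable
  have hβV : Integrable (fun ω => ∑ j, βs j * V j ω) μ :=
    integrable_finsetSum _ fun j _ => (hV j).integrable.const_mul (βs j)
  have hmean : ∫ ω, ∑ j, βs j * V j ω ∂μ = 0 :=
    integral_sum_mul_eq_zero _ _ (fun j _ => (hV j).integrable) fun j _ =>
      integral_sum_mul_eq_zero _ _ hε hε0
  calc ∫ ω, ∑ i ∈ s, (∑ j, x i j * βs j - ∑ j, x i j * βh ω j) ^ 2 ∂μ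
      ≤ ∫ ω, 2 * (L * Z ω - ∑ j, βs j * V j ω) ∂μ :=
        integral_mono_of_nonneg (ae_of_all _ fun ω => sum_nonneg fun i _ => sq_nonneg _)
          (((hZ.const_mul L).sub hβV).const_mul 2)
          (ae_of_all _ fun ω => sum_sq_sub_le_two_mul_sup'_abs s x βs (βh ω) (ε · ω) (hβh ω)
            (hmin ω))
    _ = 2 * L * ∫ ω, Z ω ∂μ := by
        rw [integral_const_mul, integral_sub (hZ.const_mul L) hβV, integral_const_mul, hmean]
        ring
    _ ≤ 2 * L * √(2 * c * log (2 * Fintype.card κ)) := by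
        gcongr
        exact integral_sup'_abs_le hV

theorem stmt4_general {Ω : Type*} [MeasureSpace Ω] [IsProbabilityMeasure (ℙ : Measure Ω)]
    (n p : ℕ) (hn : 0 < n) (hp : 0 < p)
    (x : Fin n → Fin p → ℝ) (βs : Fin p → ℝ)
    (M : ℝ) (hM : M = ⨆ j : Fin p, (1 / n : ℝ) * ∑ i, x i j ^ 4)
    (L : ℝ) (hβs : ∑ j, |βs j| ≤ L)
    (σ : ℝ) (hσ : 0 < σ)
    (ε : Fin n → Ω → ℝ)
    (hindep : iIndepFun ε ℙ)
    (hgauss : ∀ i, Measure.map (ε i) ℙ = gaussianReal 0 ⟨σ ^ 2, sq_nonneg σ⟩)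
    (y : Fin n → Ω → ℝ) (hy : ∀ i ω, y i ω = ∑ j, x i j * βs j + ε i ω)
    (S : Finset (Fin n))
    (βhat : Ω → Fin p → ℝ)
    (hβL : ∀ ω, ∑ j, |βhat ω j| ≤ L)
    (hβmin : ∀ ω, ∑ i ∈ S, (y i ω - ∑ j, x i j * βhat ω j) ^ 2
      ≤ ∑ i ∈ S, (y i ω - ∑ j, x i j * βs j) ^ 2) :
    ∫ ω, ∑ i ∈ S, ((∑ j, x i j * βs j) - ∑ j, x i j * βhat ω j) ^ 2 ∂ℙ
      ≤ 2 * L * σ * Real.sqrt (2 * Real.sqrt M * n * Real.log (2 * p)) := by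
  have : Nonempty (Fin n) := ⟨⟨0, hn⟩⟩
  have : Nonempty (Fin p) := ⟨⟨0, hp⟩⟩
  have hcol : ∀ j, ∑ i ∈ S, x i j ^ 2 ≤ n * √M := fun j => by
    simpa using sum_sq_le_card_mul_sqrt S (x · j) (by
      simpa [hM] using le_ciSup (f := fun j => (1 / n : ℝ) * ∑ i, x i j ^ 4)
        (Set.finite_range _).bddAbove j)
  have hε : ∀ i, HasSubgaussianMGF (ε i) ⟨σ ^ 2, sq_nonneg σ⟩ ℙ := fun i =>
    hasSubgaussianMGF_of_map_eq_gaussianReal (hgauss i)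
  have key := integral_sum_sq_sub_le_of_hasSubgaussianMGF S x βs βhat ε
    ((sum_nonneg fun j _ => abs_nonneg (βs j)).trans hβs) hβL (fun i _ => (hε i).integrable)
    (fun i _ => integral_eq_zero_of_map_eq_gaussianReal (hgauss i))
    (fun j => hasSubgaussianMGF_sum_mul hindep hε S (x · j)
      ((mul_le_mul_of_nonneg_left (hcol j) (sq_nonneg σ)).trans (le_coe_toNNReal _)))
    (fun ω => by simpa only [hy] using hβmin ω)
  refine key.trans_eq ?_
  rw [coe_toNNReal _ (by positivity), Fintype.card_fin,
    show 2 * (σ ^ 2 * (n * √M)) * log (2 * p) = σ ^ 2 * (2 * √M * n * log (2 * p)) by ring,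
    sqrt_mul (sq_nonneg σ), sqrt_sq hσ.le]
  ring

/-- If `β̂` is measurable w.r.t. `(εᵢ)_{i∈S}`, satisfies `|β̂|₁ ≤ L` and
`Σ_{i∈S}(yᵢ − x_iβ̂)² ≤ Σ_{i∈S}(yᵢ − x_iβ*)²`, and `|β*|₁ ≤ L`, then
`E Σ_{i∈S} (x_iβ* − x_iβ̂)² ≤ 2Lσ (2 M^{1/2} n log(2p))^{1/2}`. -/
theorem stmt4 {Ω : Type*} [MeasureSpace Ω] [IsProbabilityMeasure (ℙ : Measure Ω)]
    (n p : ℕ) (hn : 0 < n) (hp : 0 < p)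
    (x : Fin n → Fin p → ℝ) (βs : Fin p → ℝ)
    (M : ℝ) (hM : M = ⨆ j : Fin p, (1 / n : ℝ) * ∑ i, x i j ^ 4)
    (L : ℝ) (hL : 0 < L) (hβs : ∑ j, |βs j| ≤ L)
    (σ : ℝ) (hσ : 0 < σ)
    (ε : Fin n → Ω → ℝ)
    (hmeas : ∀ i, Measurable (ε i))
    (hindep : iIndepFun ε ℙ)
    (hgauss : ∀ i, Measure.map (ε i) ℙ = gaussianReal 0 ⟨σ ^ 2, sq_nonneg σ⟩)
    (y : Fin n → Ω → ℝ) (hy : ∀ i ω, y i ω = ∑ j, x i j * βs j + ε i ω)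
    (S : Finset (Fin n))
    (βhat : Ω → Fin p → ℝ)
    (hβmeas : @Measurable Ω (Fin p → ℝ)
      (MeasurableSpace.comap (fun ω (i : S) => ε i.1 ω) inferInstance) _ βhat)
    (hβL : ∀ ω, ∑ j, |βhat ω j| ≤ L)
    (hβmin : ∀ ω, ∑ i ∈ S, (y i ω - ∑ j, x i j * βhat ω j) ^ 2
      ≤ ∑ i ∈ S, (y i ω - ∑ j, x i j * βs j) ^ 2) :
    ∫ ω, ∑ i ∈ S, ((∑ j, x i j * βs j) - ∑ j, x i j * βhat ω j) ^ 2 ∂ℙ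
      ≤ 2 * L * σ * Real.sqrt (2 * Real.sqrt M * n * Real.log (2 * p)) :=
  stmt4_general n p hn hp x βs M hM L hβs σ hσ ε hindep hgauss y hy S βhat hβL hβmin
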